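/- Let S be a down-admissible set for v. Then v[S] belongs to the fundamental support fsupp(v) := { v − 2 a_i p^i : 0 ≤ i < j, a_i ≠ 0 } if and only if S is a minimal down-admissible stretch for v. Moreover, every minimal down-admissible stretch S for v satisfies a_t = 0 for all t ∈ S with t ≠ min(S), and v[S] = v − 2 a_{min(S)} p^{min(S)}. -/

import Mathlib

namespace SL2Tilt

/-- The `i`-th `p`-adic digit of `v`. -/
def dig (p v i : ℕ) : ℕ := v / p ^ i % p

/-- A stretch: a nonempty finite set of consecutive integers. -/
def IsStretch (S : Finset ℕ) : Prop :=
  S.Nonempty ∧ ∀ a ∈ S, ∀ b ∈ S, ∀ c, a ≤ c → c ≤ b → c ∈ S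

/-- `S` is down-admissible for `v` (with respect to the prime `p`):
(d1) the digit of `v` at the minimum of each maximal stretch of `S` is nonzero, and
(d2) if `s ∈ S` and the `(s+1)`-st digit is `0`, then `s + 1 ∈ S`. -/
def DownAdm (p v : ℕ) (S : Finset ℕ) : Prop :=
  (∀ s ∈ S, (s = 0 ∨ s - 1 ∉ S) → dig p v s ≠ 0) ∧
  (∀ s ∈ S, dig p v (s + 1) = 0 → s + 1 ∈ S)

/-- `S` is up-admissible for `v` (with respect to the prime `p`):
(u1) the digit of `v` at the minimum of each maximal stretch of `S` is nonzero, and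
(u2) if `s ∈ S` and the `(s+1)`-st digit is `p - 1`, then `s + 1 ∈ S`. -/
def UpAdm (p v : ℕ) (S : Finset ℕ) : Prop :=
  (∀ s ∈ S, (s = 0 ∨ s - 1 ∉ S) → dig p v s ≠ 0) ∧
  (∀ s ∈ S, dig p v (s + 1) = p - 1 → s + 1 ∈ S)

/-- `v[S] = ∑ᵢ εᵢ aᵢ pⁱ` (εᵢ = -1 for i ∈ S, else 1), as an integer.
All nonzero digits of `v` have index `< v`, so the range `Finset.range v ∪ S` suffices. -/
def vdown (p v : ℕ) (S : Finset ℕ) : ℤ :=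
  ∑ i ∈ Finset.range v ∪ S,
    (if i ∈ S then (-1 : ℤ) else 1) * (dig p v i : ℤ) * (p : ℤ) ^ i

/-- `v(S) = ∑ᵢ aᵢ' pⁱ` where `aᵢ' = -aᵢ` if `i ∈ S`, `aᵢ' = aᵢ + 2` if `i ∉ S` and
`i - 1 ∈ S`, and `aᵢ' = aᵢ` otherwise; as an integer. -/
def vup (p v : ℕ) (S : Finset ℕ) : ℤ :=
  ∑ i ∈ Finset.range v ∪ S ∪ S.image (· + 1),
    (if i ∈ S then -(dig p v i : ℤ)
      else if i - 1 ∈ S then (dig p v i : ℤ) + 2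
      else (dig p v i : ℤ)) * (p : ℤ) ^ i

/-- `v[S]` as a natural number. -/
def vdownN (p v : ℕ) (S : Finset ℕ) : ℕ := (vdown p v S).toNat

/-- `v(S)` as a natural number. -/
def vupN (p v : ℕ) (S : Finset ℕ) : ℕ := (vup p v S).toNat

/-- `fancest' p v s` is `v` with the `p`-adic digits in positions `< s` set to zero.
This is the ancestor `fancest_{s-1}(v)` of the paper: the youngest ancestor of `v`
whose `(s-1)`-st digit is zero (with `fancest' p v 0 = fancest_{-1}(v) = v`). -/
def fancest' (p v s : ℕ) : ℕ := p ^ s * (v / p ^ s)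

/-- The scalar `λ_{v,S} = ∏_{s ∈ S} (-1)^(a_s p^s) · fancest_{s-1}(v)[S]± / fancest_s(v)[S]±`. -/
def lam (p v : ℕ) (S : Finset ℕ) : ℚ :=
  ∏ s ∈ S,
    (-1 : ℚ) ^ (dig p v s * p ^ s) *
      ((vdown p (fancest' p v s) S : ℚ) / (vdown p (fancest' p v (s + 1)) S : ℚ))

/-- The generation of `v` : the number of (matrilineal) ancestors of `v`, i.e. the
number of nonzero `p`-adic digits of `v` minus one. -/
def gen (p v : ℕ) : ℕ :=
  ((Finset.range v).filter (fun i => dig p v i ≠ 0)).card - 1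

/-- A minimal down-admissible stretch for `v`: a down-admissible stretch, no proper
nonempty subset of which is down-admissible for `v`. -/
def MinDownStretch (p v : ℕ) (S : Finset ℕ) : Prop :=
  DownAdm p v S ∧ IsStretch S ∧ ∀ T ⊂ S, T.Nonempty → ¬ DownAdm p v T

/-- A minimal up-admissible stretch for `v`. -/
def MinUpStretch (p v : ℕ) (S : Finset ℕ) : Prop :=
  UpAdm p v S ∧ IsStretch S ∧ ∀ T ⊂ S, T.Nonempty → ¬ UpAdm p v T

/-- `A` and `B` are distant: `d(A,B) > 1`, i.e. `|a - b| > 1` for all `a ∈ A`, `b ∈ B`. -/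
def Distant (A B : Finset ℕ) : Prop :=
  ∀ a ∈ A, ∀ b ∈ B, a + 1 < b ∨ b + 1 < a

section Helpers

variable {p : ℕ}

lemma dig_lt (hp : 1 < p) (v i : ℕ) : dig p v i < p :=
  Nat.mod_lt _ (by omega)

lemma dig_eq_zero_of_lt {v i : ℕ} (h : v < p ^ i) : dig p v i = 0 := by
  simp [dig, Nat.div_eq_of_lt h]

lemma sum_range_lt_pow (hp : 1 < p) (c : ℕ → ℕ) (hc : ∀ s, c s < p) (t : ℕ) :
    ∑ s ∈ Finset.range t, c s * p ^ s < p ^ t := by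
  induction t with
  | zero => simp
  | succ n ih =>
    rw [Finset.sum_range_succ]
    have h1 : c n * p ^ n ≤ (p - 1) * p ^ n :=
      Nat.mul_le_mul_right _ (by have := hc n; omega)
    have h4 : p ^ n + (p - 1) * p ^ n = p ^ (n + 1) := by
      have h5 : 1 + (p - 1) = p := by omega
      calc p ^ n + (p - 1) * p ^ n = (1 + (p - 1)) * p ^ n := by ring
        _ = p * p ^ n := by rw [h5]
        _ = p ^ (n + 1) := by ring
    omega

lemma dig_sum (hp : 1 < p) (S : Finset ℕ) (c : ℕ → ℕ) (hc : ∀ s, c s < p) (t : ℕ) :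
    dig p (∑ s ∈ S, c s * p ^ s) t = if t ∈ S then c t else 0 := by
  classical
  have hppos : 0 < p := by omega
  set A := ∑ s ∈ S.filter (· < t), c s * p ^ s with hA
  set Q := ∑ s ∈ S.filter (t ≤ ·), c s * p ^ (s - t) with hQ
  have hsplit : ∑ s ∈ S, c s * p ^ s = p ^ t * Q + A := by
    rw [← Finset.sum_filter_add_sum_filter_not S (t ≤ ·)]
    have h1 : S.filter (fun s => ¬ t ≤ s) = S.filter (· < t) := by
      apply Finset.filter_congr; intro s _; simp
    rw [h1, hQ, Finset.mul_sum]
    congr 1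
    refine Finset.sum_congr rfl fun s hs => ?_
    have hts : t ≤ s := (Finset.mem_filter.mp hs).2
    rw [← mul_assoc, mul_comm (p ^ t) (c s), mul_assoc, ← pow_add]
    congr 2
    omega
  have hAlt : A < p ^ t := by
    calc A ≤ ∑ s ∈ Finset.range t, c s * p ^ s := by
          apply Finset.sum_le_sum_of_subset
          intro s hs
          simp only [Finset.mem_filter] at hs
          exact Finset.mem_range.mpr hs.2
      _ < p ^ t := sum_range_lt_pow hp c hc t
  have hdiv : (∑ s ∈ S, c s * p ^ s) / p ^ t = Q := by
    rw [hsplit, Nat.mul_add_div (pow_pos hppos t), Nat.div_eq_of_lt hAlt, add_zero]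
  rw [dig, hdiv]
  set R := ∑ s ∈ S.filter (t < ·), c s * p ^ (s - t - 1) with hR
  by_cases ht : t ∈ S
  · have hQ2 : Q = c t + p * R := by
      have h2 : S.filter (t ≤ ·) = insert t (S.filter (t < ·)) := by
        ext s
        simp only [Finset.mem_filter, Finset.mem_insert]
        constructor
        · rintro ⟨hsS, hts⟩
          rcases eq_or_lt_of_le hts with h | h
          · exact Or.inl h.symm
          · exact Or.inr ⟨hsS, h⟩
        · rintro (rfl | ⟨hsS, hts⟩)
          · exact ⟨ht, le_refl _⟩
          · exact ⟨hsS, le_of_lt hts⟩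
      rw [hQ, h2, Finset.sum_insert (by simp)]
      simp only [Nat.sub_self, pow_zero, mul_one]
      congr 1
      rw [hR, Finset.mul_sum]
      refine Finset.sum_congr rfl fun s hs => ?_
      have hts : t < s := (Finset.mem_filter.mp hs).2
      have hps : p ^ (s - t) = p * p ^ (s - t - 1) := by
        rw [← pow_succ']; congr 1; omega
      rw [hps]; ring
    rw [hQ2, if_pos ht, Nat.add_mul_mod_self_left, Nat.mod_eq_of_lt (hc t)]
  · have hQ2 : Q = p * R := by
      have h2 : S.filter (t ≤ ·) = S.filter (t < ·) := by
        ext s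
        simp only [Finset.mem_filter]
        constructor
        · rintro ⟨hsS, h⟩
          rcases eq_or_lt_of_le h with h | h
          · exact absurd (h ▸ hsS) ht
          · exact ⟨hsS, h⟩
        · rintro ⟨hsS, h⟩; exact ⟨hsS, le_of_lt h⟩
      rw [hQ, h2, hR, Finset.mul_sum]
      refine Finset.sum_congr rfl fun s hs => ?_
      have hts : t < s := (Finset.mem_filter.mp hs).2
      have hps : p ^ (s - t) = p * p ^ (s - t - 1) := by
        rw [← pow_succ']; congr 1; omega
      rw [hps]; ring
    rw [hQ2, if_neg ht, Nat.mul_mod_right]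

lemma sum_dig_range (hp : 1 < p) (v n : ℕ) :
    ∑ i ∈ Finset.range n, dig p v i * p ^ i = v % p ^ n := by
  induction n with
  | zero => simp [Nat.mod_one]
  | succ n ih =>
    rw [Finset.sum_range_succ, ih, pow_succ, Nat.mod_mul, dig]
    ring

lemma sum_dig_range_self (hp : 1 < p) (v : ℕ) :
    ∑ i ∈ Finset.range v, dig p v i * p ^ i = v := by
  rw [sum_dig_range hp, Nat.mod_eq_of_lt (Nat.lt_pow_self (n := v) hp)]

lemma vdown_eq (hp : 1 < p) (v : ℕ) (S : Finset ℕ) :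
    vdown p v S = (v : ℤ) - 2 * ∑ s ∈ S, (dig p v s : ℤ) * (p : ℤ) ^ s := by
  classical
  have hdigzero : ∀ i, v ≤ i → dig p v i = 0 := fun i hi =>
    dig_eq_zero_of_lt (lt_of_le_of_lt hi (Nat.lt_pow_self (n := i) hp))
  unfold vdown
  have h1 : ∀ i ∈ Finset.range v ∪ S,
      (if i ∈ S then (-1 : ℤ) else 1) * (dig p v i : ℤ) * (p : ℤ) ^ i
        = (dig p v i : ℤ) * (p : ℤ) ^ i
            - (if i ∈ S then 2 * ((dig p v i : ℤ) * (p : ℤ) ^ i) else 0) := by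
    intro i _
    by_cases h : i ∈ S <;> simp [h] <;> ring
  rw [Finset.sum_congr rfl h1, Finset.sum_sub_distrib, Finset.sum_ite_mem]
  have hSsub : (Finset.range v ∪ S) ∩ S = S := by
    rw [Finset.inter_eq_right]; exact Finset.subset_union_right
  rw [hSsub]
  have h2 : ∑ i ∈ Finset.range v ∪ S, (dig p v i : ℤ) * (p : ℤ) ^ i = (v : ℤ) := by
    rw [← Finset.sum_subset (Finset.subset_union_left (s₂ := S))]
    · have h3 : ((∑ i ∈ Finset.range v, dig p v i * p ^ i : ℕ) : ℤ) = (v : ℤ) := by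
        exact_mod_cast congrArg (Nat.cast : ℕ → ℤ) (sum_dig_range_self hp v)
      push_cast at h3
      exact h3
    · intro x _ hxr
      have hvx : v ≤ x := by
        by_contra h
        exact hxr (Finset.mem_range.mpr (by omega))
      simp [hdigzero x hvx]
  rw [h2, Finset.mul_sum]

end Helpers

/-- Let `S` be down-admissible for `v`. Then `v[S]` lies in the fundamental support
`fsupp(v) = {v - 2 aᵢ pⁱ : i < j, aᵢ ≠ 0}` iff `S` is a minimal down-admissible
stretch for `v`; moreover every minimal down-admissible stretch `S` has all its
digits except the one at `min S` equal to zero, and `v[S] = v - 2 a_{min S} p^{min S}`. -/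
theorem stmt13 (p v : ℕ) (hp : p.Prime) (hv : 1 ≤ v) (S : Finset ℕ)
    (hS : DownAdm p v S) :
    ((∃ i, i < Nat.log p v ∧ dig p v i ≠ 0 ∧
        vdown p v S = (v : ℤ) - 2 * (dig p v i : ℤ) * (p : ℤ) ^ i) ↔
      MinDownStretch p v S) ∧
    (MinDownStretch p v S → ∀ m ∈ S, (∀ x ∈ S, m ≤ x) →
      (∀ t ∈ S, t ≠ m → dig p v t = 0) ∧
      vdown p v S = (v : ℤ) - 2 * (dig p v m : ℤ) * (p : ℤ) ^ m) := by
  classical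
  have hp1 : 1 < p := hp.one_lt
  have key : vdown p v S = (v : ℤ) - 2 * ∑ s ∈ S, (dig p v s : ℤ) * (p : ℤ) ^ s :=
    vdown_eq hp1 v S
  have part2 : MinDownStretch p v S → ∀ m ∈ S, (∀ x ∈ S, m ≤ x) →
      (∀ t ∈ S, t ≠ m → dig p v t = 0) ∧
      vdown p v S = (v : ℤ) - 2 * (dig p v m : ℤ) * (p : ℤ) ^ m := by
    intro hmin m hmS hm
    have hzero : ∀ t ∈ S, t ≠ m → dig p v t = 0 := by
      intro t ht htm
      by_contra hne
      have hmt : m < t := lt_of_le_of_ne (hm t ht) (Ne.symm htm)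
      set T := S.filter (t ≤ ·) with hT
      have hTS : T ⊂ S := by
        rw [Finset.ssubset_iff_subset_ne]
        refine ⟨Finset.filter_subset _ _, ?_⟩
        intro hEq
        have h1 : m ∈ T := hEq ▸ hmS
        have h2 : t ≤ m := (Finset.mem_filter.mp h1).2
        omega
      have hTne : T.Nonempty := ⟨t, Finset.mem_filter.mpr ⟨ht, le_refl t⟩⟩
      refine hmin.2.2 T hTS hTne ⟨?_, ?_⟩
      · intro s hsT hcase
        obtain ⟨hsS, hts⟩ := Finset.mem_filter.mp hsT
        rcases eq_or_lt_of_le hts with rfl | hlt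
        · exact hne
        · exfalso
          have hs1S : s - 1 ∈ S := hmin.2.1.2 t ht s hsS (s - 1) (by omega) (by omega)
          have hs1T : s - 1 ∈ T := Finset.mem_filter.mpr ⟨hs1S, by omega⟩
          rcases hcase with h0 | h1
          · omega
          · exact h1 hs1T
      · intro s hsT hdig
        obtain ⟨hsS, hts⟩ := Finset.mem_filter.mp hsT
        exact Finset.mem_filter.mpr ⟨hS.2 s hsS hdig, by omega⟩
    refine ⟨hzero, ?_⟩
    rw [key]
    have hsingle : ∑ s ∈ S, (dig p v s : ℤ) * (p : ℤ) ^ s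
        = (dig p v m : ℤ) * (p : ℤ) ^ m := by
      apply Finset.sum_eq_single m
      · intro b hb hbm; rw [hzero b hb hbm]; simp
      · intro h; exact absurd hmS h
    rw [hsingle]; ring
  refine ⟨⟨?_, ?_⟩, part2⟩
  · -- forward direction
    rintro ⟨i, hilog, hdi, heq⟩
    have hNS : ∑ s ∈ S, dig p v s * p ^ s = dig p v i * p ^ i := by
      rw [key] at heq
      have h3 : ((∑ s ∈ S, dig p v s * p ^ s : ℕ) : ℤ) = ((dig p v i * p ^ i : ℕ) : ℤ) := by
        push_cast
        linarith
      exact_mod_cast h3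
    have hdig_eq : ∀ t, (if t ∈ S then dig p v t else 0)
        = (if t = i then dig p v i else 0) := by
      intro t
      have h1 := dig_sum hp1 S (dig p v) (fun s => dig_lt hp1 v s) t
      have h2 := dig_sum (p := p) hp1 {i} (dig p v) (fun s => dig_lt hp1 v s) t
      rw [Finset.sum_singleton] at h2
      rw [← hNS] at h2
      rw [← h1, h2]
      by_cases h : t = i
      · subst h; simp
      · simp [h]
    have hiS : i ∈ S := by
      by_contra h
      have h1 := hdig_eq i
      simp [h] at h1
      exact hdi h1.symm
    have honly : ∀ t ∈ S, t ≠ i → dig p v t = 0 := by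
      intro t ht hti
      have h1 := hdig_eq t
      simp [ht, hti] at h1
      exact h1
    have himin : ∀ s ∈ S, i ≤ s := by
      intro s hs
      have hSne : S.Nonempty := ⟨i, hiS⟩
      set m0 := S.min' hSne with hm0
      have hm0S : m0 ∈ S := S.min'_mem hSne
      have hm0dig : dig p v m0 ≠ 0 := by
        apply hS.1 m0 hm0S
        by_cases h0 : m0 = 0
        · exact Or.inl h0
        · right; intro hmem; have := S.min'_le _ hmem; omega
      have hm0i : m0 = i := by
        by_contra h
        exact hm0dig (honly m0 hm0S h)
      have := S.min'_le s hs
      omega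
    have hstretch : IsStretch S := by
      refine ⟨⟨i, hiS⟩, ?_⟩
      intro a ha b hb c hac hcb
      by_contra hc
      set D := S.filter (c < ·) with hD
      have hcb' : c < b := lt_of_le_of_ne hcb (fun h => hc (h ▸ hb))
      have hDne : D.Nonempty := ⟨b, Finset.mem_filter.mpr ⟨hb, hcb'⟩⟩
      set d := D.min' hDne with hd
      have hdD : d ∈ D := D.min'_mem hDne
      obtain ⟨hdS, hcd⟩ := Finset.mem_filter.mp hdD
      have hd1 : d - 1 ∉ S := by
        intro hmem
        by_cases h' : d - 1 = c
        · exact hc (h' ▸ hmem)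
        · have : d - 1 ∈ D := Finset.mem_filter.mpr ⟨hmem, by omega⟩
          have := D.min'_le _ this
          omega
      have hddig : dig p v d ≠ 0 := hS.1 d hdS (Or.inr hd1)
      have hdi : d = i := by
        by_contra h
        exact hddig (honly d hdS h)
      have := himin a ha
      omega
    have hminimal : ∀ T ⊂ S, T.Nonempty → ¬ DownAdm p v T := by
      intro T hTS hTne hTadm
      obtain ⟨hTsub, hTne'⟩ := Finset.ssubset_iff_subset_ne.mp hTS
      set mT := T.min' hTne with hmT
      have hmTT : mT ∈ T := T.min'_mem hTne
      have hmTS : mT ∈ S := hTsub hmTT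
      have hmTdig : dig p v mT ≠ 0 := by
        apply hTadm.1 mT hmTT
        by_cases h0 : mT = 0
        · exact Or.inl h0
        · right; intro hmem; have := T.min'_le _ hmem; omega
      have hmTi : mT = i := by
        by_contra h
        exact hmTdig (honly mT hmTS h)
      have hclaim : ∀ k, i + k ∈ S → i + k ∈ T := by
        intro k
        induction k with
        | zero =>
          intro _
          simpa using (hmTi ▸ hmTT)
        | succ k ih =>
          intro hk1
          have hik : i + k ∈ S := hstretch.2 i hiS (i + k + 1) hk1 (i + k) (by omega) (by omega)
          have hikT : i + k ∈ T := ih hik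
          have hdz : dig p v (i + k + 1) = 0 := honly _ hk1 (by omega)
          exact hTadm.2 (i + k) hikT hdz
      have hST : S ⊆ T := by
        intro s hs
        have his := himin s hs
        have hrw : s = i + (s - i) := by omega
        rw [hrw] at hs ⊢
        exact hclaim _ hs
      exact hTne' (Finset.Subset.antisymm hTsub hST)
    exact ⟨hS, hstretch, hminimal⟩
  · -- reverse direction
    intro hmin
    have hSne : S.Nonempty := hmin.2.1.1
    set m := S.min' hSne with hm
    obtain ⟨hzero, heq⟩ := part2 hmin m (S.min'_mem hSne) (fun x hx => S.min'_le x hx)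
    refine ⟨m, ?_, ?_, heq⟩
    · set M := S.max' hSne with hM
      have hMdig : dig p v (M + 1) ≠ 0 := by
        intro h0
        have h1 : M + 1 ∈ S := hS.2 M (S.max'_mem hSne) h0
        have := S.le_max' _ h1
        omega
      have hple : p ^ (M + 1) ≤ v := by
        by_contra h
        push_neg at h
        exact hMdig (dig_eq_zero_of_lt h)
      have hlog := (Nat.le_log_iff_pow_le hp1 (by omega)).mpr hple
      have hmM : m ≤ M := S.min'_le M (S.max'_mem hSne)
      omega
    · apply hS.1 m (S.min'_mem hSne)
      by_cases hm0 : m = 0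
      · exact Or.inl hm0
      · right; intro hmem; have := S.min'_le _ hmem; omega

end SL2Tilt
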